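/- Let e_1, e_2, e_3, e_4, e_5, e_6, e_7, e_8 be positive real numbers with e_3 e_6 > e_4 e_5, and let M be the 5×5 real matrix M = [[0, 0, −e_1, 0, 0], [0, 0, 0, −e_2, 0], [e_3, −e_4, −e_8, 0, 0], [−e_5, e_6, 0, −e_8, 0], [−e_7, −e_7, 0, 0, −e_8]]. Then every complex eigenvalue of M has strictly negative real part. -/

import Mathlib

/-!
Expanding along the first rows, the characteristic polynomial of `M` factors as
`(z + e₈) · (w² + S w + P)` with `w = z² + e₈ z`, `S = e₁e₃ + e₂e₆` and
`P = e₁e₂(e₃e₆ − e₄e₅) > 0`. The discriminant `S² − 4P = (e₁e₃ − e₂e₆)² + 4e₁e₂e₄e₅` is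
nonnegative, so `w` is a negative real number, and then `z² + e₈ z − w = 0` is a quadratic
with positive real coefficients, whose roots lie in the open left half-plane.
-/

theorem Complex.im_eq_zero_of_sq_eq_ofReal_nonneg {u : ℂ} {d : ℝ} (hd : 0 ≤ d) (h : u ^ 2 = d) :
    u.im = 0 := by
  have hre : u.re ^ 2 - u.im ^ 2 = d := by simpa [pow_two] using congrArg Complex.re h
  have him : u.re * u.im = 0 := by
    have := congrArg Complex.im h
    simp only [pow_two, Complex.mul_im, Complex.ofReal_im] at this
    linarith
  rcases mul_eq_zero.1 him with hr | hi
  · exact pow_eq_zero_iff two_ne_zero |>.1 (by nlinarith [sq_nonneg u.im])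
  · exact hi

theorem Complex.exists_neg_of_sq_add_mul_add_eq_zero {w : ℂ} {s p : ℝ} (hs : 0 < s) (hp : 0 < p)
    (hdisc : 4 * p ≤ s ^ 2) (h : w ^ 2 + s * w + p = 0) : ∃ r : ℝ, r < 0 ∧ w = r := by
  -- completing the square: `2w + s` is a square root of the real discriminant
  have hsq : (2 * w + s) ^ 2 = ((s ^ 2 - 4 * p : ℝ) : ℂ) := by
    push_cast; linear_combination 4 * h
  have him : w.im = 0 := by
    simpa using Complex.im_eq_zero_of_sq_eq_ofReal_nonneg (by linarith) hsq
  have hw : w = w.re := Complex.ext rfl (by simpa using him)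
  refine ⟨w.re, ?_, hw⟩
  rw [hw] at h
  have hr : w.re ^ 2 + s * w.re + p = 0 := by exact_mod_cast h
  nlinarith

theorem Complex.re_neg_of_sq_add_mul_add_eq_zero {z : ℂ} {b c : ℝ} (hb : 0 < b) (hc : 0 < c)
    (h : z ^ 2 + b * z + c = 0) : z.re < 0 := by
  have hre : z.re ^ 2 - z.im ^ 2 + b * z.re + c = 0 := by
    simpa [pow_two] using congrArg Complex.re h
  have him : z.im * (2 * z.re + b) = 0 := by
    have := congrArg Complex.im h
    simp only [pow_two, Complex.add_im, Complex.mul_im, Complex.ofReal_re, Complex.ofReal_im,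
      Complex.zero_im] at this
    linear_combination this
  rcases mul_eq_zero.1 him with hi | hr
  · rw [hi] at hre; nlinarith
  · linarith

theorem Complex.re_neg_of_biquadratic {z : ℂ} {b s p : ℝ} (hb : 0 < b) (hs : 0 < s) (hp : 0 < p)
    (hdisc : 4 * p ≤ s ^ 2) (h : (z ^ 2 + b * z) ^ 2 + s * (z ^ 2 + b * z) + p = 0) :
    z.re < 0 := by
  obtain ⟨r, hr, hw⟩ := Complex.exists_neg_of_sq_add_mul_add_eq_zero hs hp hdisc h
  refine Complex.re_neg_of_sq_add_mul_add_eq_zero hb (neg_pos.2 hr) ?_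
  push_cast
  linear_combination hw

theorem det_smul_one_sub_map_ofReal (e₁ e₂ e₃ e₄ e₅ e₆ e₇ e₈ : ℝ) (z : ℂ) :
    (z • (1 : Matrix (Fin 5) (Fin 5) ℂ) - (!![0, 0, -e₁, 0, 0;
                 0, 0, 0, -e₂, 0;
                 e₃, -e₄, -e₈, 0, 0;
                 -e₅, e₆, 0, -e₈, 0;
                 -e₇, -e₇, 0, 0, -e₈] : Matrix (Fin 5) (Fin 5) ℝ).map Complex.ofReal).det =
      (z + e₈) * ((z ^ 2 + e₈ * z) ^ 2 + ↑(e₁ * e₃ + e₂ * e₆) * (z ^ 2 + e₈ * z)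
        + ↑(e₁ * e₂ * (e₃ * e₆ - e₄ * e₅))) := by
  simp [Matrix.det_succ_row_zero, Fin.sum_univ_succ, Fin.succAbove, Matrix.one_apply]
  ring

theorem stmt_18 (e₁ e₂ e₃ e₄ e₅ e₆ e₇ e₈ : ℝ)
    (h₁ : 0 < e₁) (h₂ : 0 < e₂) (h₃ : 0 < e₃) (h₄ : 0 < e₄)
    (h₅ : 0 < e₅) (h₆ : 0 < e₆) (h₈ : 0 < e₈)
    (h36 : e₃ * e₆ > e₄ * e₅)
    (M : Matrix (Fin 5) (Fin 5) ℝ)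
    (hM : M = !![0, 0, -e₁, 0, 0;
                 0, 0, 0, -e₂, 0;
                 e₃, -e₄, -e₈, 0, 0;
                 -e₅, e₆, 0, -e₈, 0;
                 -e₇, -e₇, 0, 0, -e₈]) :
    ∀ z : ℂ, (z • (1 : Matrix (Fin 5) (Fin 5) ℂ) - M.map Complex.ofReal).det = 0 →
      z.re < 0 := by
  intro z hz
  subst hM
  rw [det_smul_one_sub_map_ofReal] at hz
  rcases mul_eq_zero.1 hz with hz | hz
  · simpa [eq_neg_of_add_eq_zero_left hz] using h₈
  · refine Complex.re_neg_of_biquadratic h₈ (by positivity) ?_ ?_ hz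
    · exact mul_pos (by positivity) (sub_pos.2 h36)
    · nlinarith [sq_nonneg (e₁ * e₃ - e₂ * e₆), mul_pos (mul_pos h₁ h₂) (mul_pos h₄ h₅)]
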